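/- Let K = {θ ∈ R^d : Aθ ≤ b} be a polytope contained in a ball of radius R, and for θ in the interior of K define Φ(θ) = α⁻¹ Σ_{i=1}^m aᵢaᵢᵀ/(aᵢᵀθ − bᵢ)² + η⁻¹ I_d for parameters α, η > 0. Then for any u, v in the interior of K, the cross-ratio distance satisfies σ(u,v)² ≥ (1/(2mα⁻¹ + 2η⁻¹R²)) · (u−v)ᵀ Φ(u) (u−v). -/
import Mathlib


open Matrix

/-- Cross-ratio distance σ(u,v) = (‖u−v‖·‖p−q‖)/(‖p−u‖·‖v−q‖). -/
noncomputable def crossRatio {d : ℕ} (u v p q : Fin d → ℝ) : ℝ :=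
  (Real.sqrt ((u - v) ⬝ᵥ (u - v)) * Real.sqrt ((p - q) ⬝ᵥ (p - q))) /
    (Real.sqrt ((p - u) ⬝ᵥ (p - u)) * Real.sqrt ((v - q) ⬝ᵥ (v - q)))

/-- The regularized ("soft-threshold") log-barrier Hessian
Φ(θ) = α⁻¹ Σᵢ aᵢaᵢᵀ/(aᵢᵀθ − bᵢ)² + η⁻¹ I. -/
noncomputable def softPhi {m d : ℕ} (A : Matrix (Fin m) (Fin d) ℝ) (b : Fin m → ℝ)
    (α η : ℝ) (θ : Fin d → ℝ) : Matrix (Fin d) (Fin d) ℝ :=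
  α⁻¹ • ∑ i, ((A.mulVec θ i - b i) ^ 2)⁻¹ • vecMulVec (A i) (A i) +
    η⁻¹ • (1 : Matrix (Fin d) (Fin d) ℝ)

lemma dot_sum' {d m : ℕ} (w : Fin d → ℝ) (g : Fin m → (Fin d → ℝ)) :
    w ⬝ᵥ (∑ i, g i) = ∑ i, w ⬝ᵥ g i := by
  simp [dotProduct, Finset.sum_apply, Finset.mul_sum]
  exact Finset.sum_comm

lemma sum_mulVec' {d m : ℕ} (f : Fin m → Matrix (Fin d) (Fin d) ℝ) (w : Fin d → ℝ) :
    (∑ i, f i) *ᵥ w = ∑ i, f i *ᵥ w := by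
  ext j
  simp [Matrix.mulVec, dotProduct, Matrix.sum_apply, Finset.sum_apply, Finset.sum_mul]
  exact Finset.sum_comm

lemma dot_vecMulVec {d : ℕ} (a w : Fin d → ℝ) :
    w ⬝ᵥ (vecMulVec a a *ᵥ w) = (a ⬝ᵥ w) ^ 2 := by
  simp [Matrix.mulVec, dotProduct, vecMulVec_apply, sq, Finset.sum_mul, Finset.mul_sum]
  rw [Finset.sum_comm]
  congr 1; ext i; congr 1; ext j; ring

lemma quad_form {m d : ℕ} (A : Matrix (Fin m) (Fin d) ℝ) (b : Fin m → ℝ) (α η : ℝ)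
    (u w : Fin d → ℝ) :
    w ⬝ᵥ (softPhi A b α η u).mulVec w
    = α⁻¹ * ∑ i, ((A.mulVec u i - b i)^2)⁻¹ * (A i ⬝ᵥ w)^2 + η⁻¹ * (w ⬝ᵥ w) := by
  unfold softPhi
  rw [Matrix.add_mulVec, dotProduct_add, Matrix.smul_mulVec, Matrix.smul_mulVec,
    Matrix.one_mulVec, dotProduct_smul, dotProduct_smul, sum_mulVec', dot_sum']
  congr 1
  rw [smul_eq_mul]
  congr 1
  apply Finset.sum_congr rfl
  intro i _
  rw [Matrix.smul_mulVec, dotProduct_smul, smul_eq_mul, dot_vecMulVec]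

lemma neg_sq_le_of_sq_le_sq {a b : ℝ} (h : a * a ≤ b ^ 2 * b ^ 2) : -(b ^ 2) ≤ a := by
  nlinarith [sq_nonneg b, sq_nonneg (a + b ^ 2)]

lemma smul_dot_smul {d : ℕ} (c : ℝ) (x : Fin d → ℝ) :
    (c • x) ⬝ᵥ (c • x) = c ^ 2 * (x ⬝ᵥ x) := by
  rw [smul_dotProduct, dotProduct_smul, smul_eq_mul, smul_eq_mul]; ring

lemma sqrt_smul_dot {d : ℕ} (c : ℝ) (x : Fin d → ℝ) :
    Real.sqrt ((c • x) ⬝ᵥ (c • x)) = |c| * Real.sqrt (x ⬝ᵥ x) := by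
  rw [smul_dot_smul, Real.sqrt_mul (sq_nonneg c), Real.sqrt_sq_eq_abs]

set_option maxHeartbeats 2000000 in
theorem stmt1 (d m : ℕ) (A : Matrix (Fin m) (Fin d) ℝ) (b : Fin m → ℝ) (R α η : ℝ)
    (hα : 0 < α) (hη : 0 < η)
    (K : Set (Fin d → ℝ)) (hKdef : K = {θ | ∀ i, A.mulVec θ i ≤ b i})
    (hKR : ∀ x ∈ K, Real.sqrt (x ⬝ᵥ x) ≤ R)
    (u v p q : Fin d → ℝ)
    (hu : u ∈ interior K) (hv : v ∈ interior K)
    (hp : p ∈ frontier K) (hq : q ∈ frontier K)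
    (s t : ℝ) (hs : 0 < s) (hst : s < t) (ht : t < 1)
    (hus : u = p + s • (q - p)) (hvt : v = p + t • (q - p)) :
    (crossRatio u v p q) ^ 2 ≥
      (1 / (2 * m * α⁻¹ + 2 * η⁻¹ * R ^ 2)) *
        ((u - v) ⬝ᵥ (softPhi A b α η u).mulVec (u - v)) := by
  -- K is closed
  have hKc : IsClosed K := by
    rw [hKdef]
    have h1 : {θ : Fin d → ℝ | ∀ i, A.mulVec θ i ≤ b i}
        = ⋂ i, {θ | A.mulVec θ i ≤ b i} := by ext θ; simp
    rw [h1]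
    refine isClosed_iInter fun i => isClosed_le ?_ continuous_const
    have h2 : (fun θ : Fin d → ℝ => A.mulVec θ i) = fun θ => ∑ j, A i j * θ j := by
      funext θ; simp [Matrix.mulVec, dotProduct]
    rw [h2]
    exact continuous_finset_sum _ fun j _ => Continuous.mul continuous_const (continuous_apply j)
  have hpK : p ∈ K := hKc.frontier_subset hp
  have hqK : q ∈ K := hKc.frontier_subset hq
  -- p ≠ q
  have hpq : p ≠ q := by
    intro h
    have hup : u = p := by rw [hus, ← h]; simp
    exact hp.2 (hup ▸ hu)
  -- basic positivity
  have hQpos : 0 < (q - p) ⬝ᵥ (q - p) := by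
    rcases lt_or_eq_of_le (Finset.sum_nonneg fun j _ => mul_self_nonneg ((q - p) j) :
        (0:ℝ) ≤ (q - p) ⬝ᵥ (q - p)) with h | h
    · exact h
    · exact absurd (sub_eq_zero.mp (dotProduct_self_eq_zero.mp h.symm)).symm hpq
  set Q := (q - p) ⬝ᵥ (q - p) with hQ
  have hsQ : 0 < Real.sqrt Q := Real.sqrt_pos.mpr hQpos
  have huv : u - v = (s - t) • (q - p) := by rw [hus, hvt]; module
  have hpu : p - u = (-s) • (q - p) := by rw [hus]; module
  have hvq : v - q = (t - 1) • (q - p) := by rw [hvt]; module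
  have hpmq : p - q = (-1 : ℝ) • (q - p) := by module
  set σb : ℝ := (t - s) / (s * (1 - t)) with hσb
  have hs1t : 0 < s * (1 - t) := mul_pos hs (by linarith)
  have hσpos : 0 < σb := div_pos (by linarith) hs1t
  have hσmul : σb * (s * (1 - t)) = t - s := div_mul_cancel₀ _ hs1t.ne'
  -- cross ratio value
  have hcr : crossRatio u v p q = σb := by
    unfold crossRatio
    rw [huv, hpu, hvq, hpmq, sqrt_smul_dot, sqrt_smul_dot, sqrt_smul_dot, sqrt_smul_dot,
      abs_of_nonpos (by linarith : s - t ≤ 0), abs_of_nonpos (by linarith : -s ≤ 0),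
      abs_of_nonpos (by linarith : t - 1 ≤ 0), abs_of_nonpos (by norm_num : (-1:ℝ) ≤ 0), hσb,
      show -(s - t) = t - s from by ring, show - -s = s from by ring,
      show -(t - 1) = 1 - t from by ring, show - -(1:ℝ) = 1 from by ring]
    rw [div_eq_div_iff
      (mul_pos (mul_pos hs hsQ) (mul_pos (by linarith : (0:ℝ) < 1 - t) hsQ)).ne'
      (mul_pos hs (by linarith : (0:ℝ) < 1 - t)).ne']
    ring
  -- constraint nonnegativity at p and q
  rw [hKdef] at hpK hqK
  -- per-term bound
  have hterm : ∀ i, ((A.mulVec u i - b i) ^ 2)⁻¹ * (A i ⬝ᵥ (u - v)) ^ 2 ≤ σb ^ 2 := by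
    intro i
    set c := b i - A.mulVec p i with hc
    set e := b i - A.mulVec q i with he
    have hc0 : 0 ≤ c := sub_nonneg.mpr (hpK i)
    have he0 : 0 ≤ e := sub_nonneg.mpr (hqK i)
    have hAu : A.mulVec u i = A.mulVec p i + s * (A.mulVec q i - A.mulVec p i) := by
      rw [hus]
      simp [Matrix.mulVec_add, Matrix.mulVec_smul, Matrix.mulVec_sub]
    have hF : A.mulVec u i - b i = -(c + s * (e - c)) := by
      rw [hAu, hc, he]; ring
    have hAw : A i ⬝ᵥ (u - v) = (t - s) * (e - c) := by
      have h1 : A i ⬝ᵥ (u - v) = A.mulVec (u - v) i := rfl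
      have h2 : A.mulVec (u - v) i = A.mulVec u i - A.mulVec v i := by
        simp [Matrix.mulVec_sub]
      have hAv : A.mulVec v i = A.mulVec p i + t * (A.mulVec q i - A.mulVec p i) := by
        rw [hvt]
        simp [Matrix.mulVec_add, Matrix.mulVec_smul, Matrix.mulVec_sub]
      rw [h1, h2, hAu, hAv, hc, he]; ring
    set F : ℝ := c + s * (e - c) with hFdef
    have key : s * (1 - t) * |e - c| ≤ F := by
      rw [hFdef]
      rcases abs_cases (e - c) with ⟨h1, h2⟩ | ⟨h1, h2⟩ <;> rw [h1]
      · nlinarith [mul_nonneg (mul_nonneg hs.le (by linarith : (0:ℝ) ≤ t)) h2, hc0]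
      · nlinarith [mul_nonneg (mul_nonneg (by linarith : (0:ℝ) ≤ 1 - t)
            (by linarith : (0:ℝ) ≤ 1 - s)) hc0,
          mul_nonneg hc0 (by linarith : (0:ℝ) ≤ t - s),
          mul_nonneg (mul_nonneg hs.le (by linarith : (0:ℝ) ≤ 2 - t)) he0]
    by_cases hF0 : F = 0
    · have habs : |e - c| = 0 := by
        have h0 : s * (1 - t) * |e - c| ≤ 0 := hF0 ▸ key
        nlinarith [abs_nonneg (e - c), hs1t]
      have hec : e - c = 0 := abs_eq_zero.mp habs
      rw [hAw, hec, mul_zero]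
      simp only [ne_eq, OfNat.ofNat_ne_zero, not_false_eq_true, zero_pow, mul_zero]
      positivity
    · have hF2 : 0 < F ^ 2 := by positivity
      rw [hF, hAw]
      have hneg : (-F) ^ 2 = F ^ 2 := by ring
      rw [hneg, inv_mul_le_iff₀ hF2]
      have hkey2 : (s * (1 - t)) ^ 2 * (e - c) ^ 2 ≤ F ^ 2 := by
        have h4 := mul_self_le_mul_self (mul_nonneg hs1t.le (abs_nonneg (e - c))) key
        calc (s * (1 - t)) ^ 2 * (e - c) ^ 2
            = (s * (1 - t) * |e - c|) * (s * (1 - t) * |e - c|) := by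
              rw [← sq_abs (e - c)]; ring
          _ ≤ F * F := h4
          _ = F ^ 2 := (sq F).symm
      calc ((t - s) * (e - c)) ^ 2
          = σb ^ 2 * ((s * (1 - t)) ^ 2 * (e - c) ^ 2) := by rw [← hσmul]; ring
        _ ≤ σb ^ 2 * F ^ 2 := mul_le_mul_of_nonneg_left hkey2 (sq_nonneg σb)
        _ = F ^ 2 * σb ^ 2 := by ring
  -- sum bound
  have hsum : ∑ i, ((A.mulVec u i - b i) ^ 2)⁻¹ * (A i ⬝ᵥ (u - v)) ^ 2 ≤ m * σb ^ 2 := by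
    calc ∑ i, ((A.mulVec u i - b i) ^ 2)⁻¹ * (A i ⬝ᵥ (u - v)) ^ 2
        ≤ ∑ _i : Fin m, σb ^ 2 := Finset.sum_le_sum fun i _ => hterm i
      _ = m * σb ^ 2 := by simp [Finset.sum_const, Finset.card_univ, nsmul_eq_mul]
  -- radius bounds
  have hdotnn : ∀ x : Fin d → ℝ, 0 ≤ x ⬝ᵥ x := fun x =>
    Finset.sum_nonneg fun j _ => mul_self_nonneg (x j)
  have hppK : p ⬝ᵥ p ≤ R ^ 2 := by
    have h1 := hKR p (by rw [hKdef]; exact hpK)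
    nlinarith [Real.sq_sqrt (hdotnn p), Real.sqrt_nonneg (p ⬝ᵥ p)]
  have hqqK : q ⬝ᵥ q ≤ R ^ 2 := by
    have h1 := hKR q (by rw [hKdef]; exact hqK)
    nlinarith [Real.sq_sqrt (hdotnn q), Real.sqrt_nonneg (q ⬝ᵥ q)]
  have hcs : (p ⬝ᵥ q) ^ 2 ≤ (p ⬝ᵥ p) * (q ⬝ᵥ q) := by
    have := Finset.sum_mul_sq_le_sq_mul_sq Finset.univ p q
    simpa [dotProduct, sq] using this
  have hR0 : 0 < R := by
    have hR0' : 0 ≤ R := le_trans (Real.sqrt_nonneg _) (hKR p (by rw [hKdef]; exact hpK))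
    rcases eq_or_lt_of_le hR0' with h | h
    · exfalso
      have hp0 : p = 0 := dotProduct_self_eq_zero.mp (le_antisymm (by nlinarith) (hdotnn p))
      have hq0 : q = 0 := dotProduct_self_eq_zero.mp (le_antisymm (by nlinarith) (hdotnn q))
      exact hpq (hp0.trans hq0.symm)
    · exact h
  have hQexp : Q = p ⬝ᵥ p - 2 * (p ⬝ᵥ q) + q ⬝ᵥ q := by
    rw [hQ]
    simp [sub_dotProduct, dotProduct_sub, dotProduct_comm q p]
    ring
  have hpq4 : (p ⬝ᵥ q) * (p ⬝ᵥ q) ≤ R ^ 2 * R ^ 2 := by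
    nlinarith [hcs, mul_le_mul hppK hqqK (hdotnn q) (sq_nonneg R)]
  have hpqge : -(R ^ 2) ≤ p ⬝ᵥ q := neg_sq_le_of_sq_le_sq hpq4
  have hQle : Q ≤ 4 * R ^ 2 := by
    rw [hQexp]
    linarith [hppK, hqqK, hpqge]
  -- identity-part bound
  have hW : (u - v) ⬝ᵥ (u - v) ≤ 2 * R ^ 2 * σb ^ 2 := by
    rw [huv, smul_dot_smul, ← hQ]
    have h14 : s * (1 - t) ≤ 1 / 4 := by
      nlinarith [sq_nonneg (2 * t - 1),
        mul_nonneg (by linarith : (0:ℝ) ≤ t - s) (by linarith : (0:ℝ) ≤ 1 - t)]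
    have h1 : (s - t) ^ 2 = σb ^ 2 * (s * (1 - t)) ^ 2 := by
      linear_combination (-(t - s) - σb * (s * (1 - t))) * hσmul
    rw [h1]
    have h116 : (s * (1 - t)) ^ 2 ≤ 1 / 16 := by nlinarith [h14, hs1t]
    have e1 : (s * (1 - t)) ^ 2 * Q ≤ (1 / 16) * (4 * R ^ 2) :=
      mul_le_mul h116 hQle hQpos.le (by norm_num)
    have e2 := mul_le_mul_of_nonneg_left e1 (sq_nonneg σb)
    nlinarith [mul_nonneg (sq_nonneg σb) (sq_nonneg R)]
  -- assemble
  have hαi : 0 < α⁻¹ := inv_pos.mpr hα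
  have hηi : 0 < η⁻¹ := inv_pos.mpr hη
  have hD : 0 < 2 * m * α⁻¹ + 2 * η⁻¹ * R ^ 2 := by positivity
  rw [ge_iff_le, quad_form, hcr, one_div, inv_mul_le_iff₀ hD]
  have b1 := mul_le_mul_of_nonneg_left hsum hαi.le
  have b2 := mul_le_mul_of_nonneg_left hW hηi.le
  have b3 : 0 ≤ (m : ℝ) * α⁻¹ * σb ^ 2 :=
    mul_nonneg (mul_nonneg (Nat.cast_nonneg m) hαi.le) (sq_nonneg σb)
  nlinarith [b1, b2, b3]
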